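/- Let Z and W be zero-dimensional separable metrizable spaces each containing a homeomorphic copy of the Cantor space 2^ω, and let D, E ⊆ 𝒫(ω). Then Γ_D(Z) ⊆ Γ_E(Z) if and only if Γ_D(W) ⊆ Γ_E(W). -/

import Mathlib

/-!
A countable clopen basis of a zero-dimensional second countable space yields an inducing
map into `2^ω`, and each of `Z`, `W` contains a copy of `2^ω`. An inclusion
`Γ_D ⊆ Γ_E` passes from a space to any subspace, since every member of `Γ_D` of the subspace
is the trace of a member of `Γ_D` of the ambient space. So the inclusion for `Z` gives it for
`2^ω`, and hence for `W`; symmetrically back.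
-/

/-- The Hausdorff operation determined by `D ⊆ 𝒫(ω)`. -/
def hausdorffOp {Z : Type*} (D : Set (Set ℕ)) (A : ℕ → Set Z) : Set Z :=
  {x | {n | x ∈ A n} ∈ D}

/-- `Γ_D(Z)`: sets obtained by applying `H_D` to a sequence of open sets. -/
def GammaD {Z : Type*} [TopologicalSpace Z] (D : Set (Set ℕ)) : Set (Set Z) :=
  {S | ∃ A : ℕ → Set Z, (∀ n, IsOpen (A n)) ∧ S = hausdorffOp D A}

open Set TopologicalSpace Topology

lemma preimage_hausdorffOp {X Y : Type*} (f : X → Y) (D : Set (Set ℕ)) (B : ℕ → Set Y) :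
    f ⁻¹' hausdorffOp D B = hausdorffOp D (fun n => f ⁻¹' B n) := rfl

section GammaD

variable {X Y : Type*} [TopologicalSpace X] [TopologicalSpace Y] {f : X → Y}
  {D E : Set (Set ℕ)}

lemma Continuous.preimage_mem_GammaD (hf : Continuous f) {S : Set Y}
    (hS : S ∈ GammaD D) : f ⁻¹' S ∈ GammaD D := by
  obtain ⟨B, hB, rfl⟩ := hS
  exact ⟨fun n => f ⁻¹' B n, fun n => (hB n).preimage hf, preimage_hausdorffOp f D B⟩

lemma Topology.IsInducing.exists_preimage_eq_of_mem_GammaD (hf : IsInducing f)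
    {S : Set X} (hS : S ∈ GammaD D) :
    ∃ T ∈ (GammaD D : Set (Set Y)), f ⁻¹' T = S := by
  obtain ⟨A, hA, rfl⟩ := hS
  choose B hB hBA using fun n => hf.isOpen_iff.1 (hA n)
  refine ⟨hausdorffOp D B, ⟨B, hB, rfl⟩, ?_⟩
  simp only [preimage_hausdorffOp, hBA]

lemma Topology.IsInducing.GammaD_subset (hf : IsInducing f)
    (h : (GammaD D : Set (Set Y)) ⊆ GammaD E) : (GammaD D : Set (Set X)) ⊆ GammaD E := by
  intro S hS
  obtain ⟨T, hT, rfl⟩ := hf.exists_preimage_eq_of_mem_GammaD hS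
  exact hf.continuous.preimage_mem_GammaD (h hT)

end GammaD

lemma Topology.isInducing_of_isTopologicalBasis {X Y : Type*} [TopologicalSpace X]
    [TopologicalSpace Y] {f : X → Y} (hf : Continuous f) {B : Set (Set X)}
    (hB : IsTopologicalBasis B) (h : ∀ U ∈ B, ∃ V, IsOpen V ∧ f ⁻¹' V = U) : IsInducing f :=
  ⟨le_antisymm hf.le_induced <|
    hB.eq_generateFrom ▸ le_generateFrom fun U hU => isOpen_induced_iff.2 (h U hU)⟩

lemma isInducing_pi_boolIndicator {X : Type*} [TopologicalSpace X] {V : ℕ → Set X}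
    (hV : ∀ n, IsClopen (V n)) (hB : IsTopologicalBasis (range V)) :
    IsInducing fun x n => (V n).boolIndicator x := by
  refine isInducing_of_isTopologicalBasis
    (continuous_pi fun n => (continuous_boolIndicator_iff_isClopen _).2 (hV n)) hB ?_
  rintro _ ⟨n, rfl⟩
  refine ⟨(fun g : ℕ → Bool => g n) ⁻¹' {true},
    (isOpen_discrete _).preimage (continuous_apply n), ?_⟩
  ext x
  exact ((V n).mem_iff_boolIndicator x).symm

lemma isTopologicalBasis_isClopen_of_exists_isClopen {X : Type*} [TopologicalSpace X]
    (hzd : ∀ x : X, ∀ U : Set X, IsOpen U → x ∈ U → ∃ V : Set X, IsClopen V ∧ x ∈ V ∧ V ⊆ U) :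
    IsTopologicalBasis {V : Set X | IsClopen V} :=
  isTopologicalBasis_of_isOpen_of_nhds (fun _ hV => hV.isOpen) fun x U hx hU => hzd x U hU hx

lemma exists_isInducing_cantor {X : Type*} [TopologicalSpace X] [SecondCountableTopology X]
    (hzd : ∀ x : X, ∀ U : Set X, IsOpen U → x ∈ U → ∃ V : Set X, IsClopen V ∧ x ∈ V ∧ V ⊆ U) :
    ∃ e : X → ℕ → Bool, IsInducing e := by
  obtain ⟨B, hBcl, hBc, hB⟩ := (isTopologicalBasis_isClopen_of_exists_isClopen hzd).exists_countable
  -- `∅` is added only to make the family nonempty, so that it can be indexed by `ℕ`.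
  obtain ⟨V, hV⟩ := (hBc.insert ∅).exists_eq_range (insert_nonempty ∅ B)
  have hVcl : ∀ n, IsClopen (V n) := by
    intro n
    rcases (hV ▸ mem_range_self n : V n ∈ insert ∅ B) with h | h
    · exact h ▸ isClopen_empty
    · exact hBcl h
  exact ⟨_, isInducing_pi_boolIndicator hVcl (hV ▸ hB.insert_empty)⟩

theorem stmt14_general {Z W : Type*} [TopologicalSpace Z] [TopologicalSpace W]
    [SecondCountableTopology Z] [SecondCountableTopology W]
    (hzdZ : ∀ x : Z, ∀ U : Set Z, IsOpen U → x ∈ U → ∃ V : Set Z, IsClopen V ∧ x ∈ V ∧ V ⊆ U)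
    (hzdW : ∀ x : W, ∀ U : Set W, IsOpen U → x ∈ U → ∃ V : Set W, IsClopen V ∧ x ∈ V ∧ V ⊆ U)
    (hKZ : ∃ K : Set Z, Nonempty (K ≃ₜ (ℕ → Bool)))
    (hKW : ∃ K : Set W, Nonempty (K ≃ₜ (ℕ → Bool)))
    (D E : Set (Set ℕ)) :
    (GammaD D : Set (Set Z)) ⊆ GammaD E ↔ (GammaD D : Set (Set W)) ⊆ GammaD E := by
  obtain ⟨eZ, heZ⟩ := exists_isInducing_cantor hzdZ
  obtain ⟨eW, heW⟩ := exists_isInducing_cantor hzdW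
  obtain ⟨KZ, ⟨φZ⟩⟩ := hKZ
  obtain ⟨KW, ⟨φW⟩⟩ := hKW
  have hmZ : IsInducing (Subtype.val ∘ φZ.symm) := IsInducing.subtypeVal.comp φZ.symm.isInducing
  have hmW : IsInducing (Subtype.val ∘ φW.symm) := IsInducing.subtypeVal.comp φW.symm.isInducing
  exact ⟨fun h => heW.GammaD_subset (hmZ.GammaD_subset h),
    fun h => heZ.GammaD_subset (hmW.GammaD_subset h)⟩

theorem stmt14 {Z W : Type*} [TopologicalSpace Z] [TopologicalSpace W]
    [TopologicalSpace.MetrizableSpace Z] [SecondCountableTopology Z]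
    [TopologicalSpace.MetrizableSpace W] [SecondCountableTopology W]
    (hneZ : Nonempty Z) (hneW : Nonempty W)
    (hzdZ : ∀ x : Z, ∀ U : Set Z, IsOpen U → x ∈ U → ∃ V : Set Z, IsClopen V ∧ x ∈ V ∧ V ⊆ U)
    (hzdW : ∀ x : W, ∀ U : Set W, IsOpen U → x ∈ U → ∃ V : Set W, IsClopen V ∧ x ∈ V ∧ V ⊆ U)
    (hKZ : ∃ K : Set Z, Nonempty (K ≃ₜ (ℕ → Bool)))
    (hKW : ∃ K : Set W, Nonempty (K ≃ₜ (ℕ → Bool)))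
    (D E : Set (Set ℕ)) :
    (GammaD D : Set (Set Z)) ⊆ GammaD E ↔ (GammaD D : Set (Set W)) ⊆ GammaD E :=
  stmt14_general hzdZ hzdW hKZ hKW D E
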